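/- arXiv:2003.01035 — 7 statements merged into one kernel-verified Lean document; each statement's English description precedes it below -/
import Mathlib

section
/- Let n ≥ 1 and let A, B be n×n complex matrices. Then the function s ↦ exp(A + s•B) (matrix exponential, s ∈ ℝ) has derivative at s = 0 equal to the Bochner integral ∫_{u∈[0,1]} exp((1−u)•A) * B * exp(u•A) du (Duhamel's formula for the derivative of the matrix exponential). -/
/-! Differentiating `u ↦ exp ((1 - u) • C) * exp (u • A)` gives
`exp ((1 - u) • C) * (A - C) * exp (u • A)`, so the fundamental theorem of calculus yields
`exp C - exp A = ∫ u in 0..1, exp ((1 - u) • C) * (C - A) * exp (u • A)`.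
With `C = A + s • B` this reads `exp (A + s • B) - exp A = s • F s`, where `F` is continuous
(a parametric integral of a jointly continuous integrand), so the derivative at `0` is `F 0`. -/

open MeasureTheory NormedSpace

attribute [local instance] Matrix.linftyOpNormedAddCommGroup Matrix.linftyOpNormedSpace
  Matrix.linftyOpNormedRing Matrix.linftyOpNormedAlgebra

theorem hasDerivAt_of_sub_eq_smul {𝕜 E : Type*} [NontriviallyNormedField 𝕜]
    [NormedAddCommGroup E] [NormedSpace 𝕜 E] {f g : 𝕜 → E} {a : 𝕜}
    (hfg : ∀ x, f x - f a = (x - a) • g x) (hg : ContinuousAt g a) :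
    HasDerivAt f (g a) a := by
  refine hasDerivAt_iff_tendsto_slope.mpr <| (hg.tendsto.mono_left nhdsWithin_le_nhds).congr' ?_
  filter_upwards [self_mem_nhdsWithin] with x hx
  rw [slope_def_module, hfg, smul_smul, inv_mul_cancel₀ (sub_ne_zero.mpr hx), one_smul]

section BanachAlgebra

variable {𝔸 : Type*} [NormedRing 𝔸] [NormedAlgebra ℝ 𝔸] [CompleteSpace 𝔸]

@[fun_prop]
theorem continuous_exp_of_normedAlgebra_real : Continuous (exp : 𝔸 → 𝔸) :=
  continuous_iff_continuousAt.mpr fun x => (exp_analytic (𝕂 := ℝ) x).continuousAt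

theorem hasDerivAt_exp_one_sub_smul (C : 𝔸) (t : ℝ) :
    HasDerivAt (fun u : ℝ => exp ((1 - u) • C)) (-(C * exp ((1 - t) • C))) t := by
  have h := (hasDerivAt_exp_smul_const' C (1 - t)).scomp t ((hasDerivAt_id t).const_sub 1)
  simpa only [Function.comp_def, neg_smul, one_smul] using h

theorem hasDerivAt_exp_one_sub_smul_mul_exp_smul (C A : 𝔸) (t : ℝ) :
    HasDerivAt (fun u : ℝ => exp ((1 - u) • C) * exp (u • A))
      (exp ((1 - t) • C) * (A - C) * exp (t • A)) t := by
  refine ((hasDerivAt_exp_one_sub_smul C t).mul (hasDerivAt_exp_smul_const' A t)).congr_deriv ?_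
  rw [((Commute.refl C).smul_right (1 - t)).exp_right.eq, ← mul_assoc]
  noncomm_ring

theorem exp_sub_exp_eq_intervalIntegral (C A : 𝔸) :
    exp C - exp A = ∫ u in (0 : ℝ)..1, exp ((1 - u) • C) * (C - A) * exp (u • A) := by
  have hint : Continuous fun u : ℝ => exp ((1 - u) • C) * (A - C) * exp (u • A) := by fun_prop
  have hFTC := intervalIntegral.integral_eq_sub_of_hasDerivAt
    (fun t _ => hasDerivAt_exp_one_sub_smul_mul_exp_smul C A t) (hint.intervalIntegrable 0 1)
  simp only [sub_self, zero_smul, sub_zero, one_smul, exp_zero, one_mul, mul_one] at hFTC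
  rw [← neg_sub, ← hFTC, ← intervalIntegral.integral_neg]
  congr 1 with u
  noncomm_ring

theorem hasDerivAt_exp_add_smul (A B : 𝔸) :
    HasDerivAt (fun s : ℝ => exp (A + s • B))
      (∫ u in (0 : ℝ)..1, exp ((1 - u) • A) * B * exp (u • A)) 0 := by
  have hcont : Continuous fun s : ℝ =>
      ∫ u in (0 : ℝ)..1, exp ((1 - u) • (A + s • B)) * B * exp (u • A) :=
    intervalIntegral.continuous_parametric_intervalIntegral_of_continuous' (by fun_prop) 0 1
  have hdiff (s : ℝ) : exp (A + s • B) - exp (A + (0 : ℝ) • B) =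
      (s - 0) • ∫ u in (0 : ℝ)..1, exp ((1 - u) • (A + s • B)) * B * exp (u • A) := by
    rw [zero_smul, add_zero, exp_sub_exp_eq_intervalIntegral, add_sub_cancel_left, sub_zero,
      ← intervalIntegral.integral_smul]
    simp only [mul_smul_comm, smul_mul_assoc]
  simpa only [zero_smul, add_zero] using hasDerivAt_of_sub_eq_smul hdiff hcont.continuousAt

end BanachAlgebra

theorem duhamel_deriv_matrix_exp_general (n : ℕ)
    (A B : Matrix (Fin n) (Fin n) ℂ) :
    HasDerivAt (fun s : ℝ => NormedSpace.exp (A + s • B))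
      (∫ u in Set.Icc (0 : ℝ) 1,
        NormedSpace.exp ((1 - u) • A) * B * NormedSpace.exp (u • A)) 0 := by
  rw [integral_Icc_eq_integral_Ioc, ← intervalIntegral.integral_of_le zero_le_one]
  exact hasDerivAt_exp_add_smul A B

/-- **Duhamel's formula**: the derivative at `s = 0` of `s ↦ exp (A + s • B)` for
`n × n` complex matrices is `∫_{u ∈ [0,1]} exp ((1-u) • A) * B * exp (u • A) du`. -/
theorem duhamel_deriv_matrix_exp (n : ℕ) (hn : 1 ≤ n)
    (A B : Matrix (Fin n) (Fin n) ℂ) :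
    HasDerivAt (fun s : ℝ => NormedSpace.exp (A + s • B))
      (∫ u in Set.Icc (0 : ℝ) 1,
        NormedSpace.exp ((1 - u) • A) * B * NormedSpace.exp (u • A)) 0 :=
  duhamel_deriv_matrix_exp_general n A B
end

section
/- Let n ≥ 1, let H be a Hermitian n×n complex matrix and β > 0, and let ⟨·,·⟩ denote the associated Kubo–Mori–Bogoliubov form on n×n complex matrices. Then for every n×n complex matrix A, the number ⟨A,A⟩ is real and nonnegative (i.e., the KMB form is positive semidefinite). -/
open MeasureTheory Matrix

attribute [local instance] Matrix.linftyOpNormedAddCommGroup Matrix.linftyOpNormedSpace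
  Matrix.linftyOpNormedRing Matrix.linftyOpNormedAlgebra

lemma kmbExpEig {n : ℕ} {H : Matrix (Fin n) (Fin n) ℂ} (hH : H.IsHermitian) (s : ℝ) :
    NormedSpace.exp ((-s) • H) =
      (hH.eigenvectorUnitary : Matrix (Fin n) (Fin n) ℂ) *
        diagonal (fun i => (Real.exp (-s * hH.eigenvalues i) : ℂ)) *
        star (hH.eigenvectorUnitary : Matrix (Fin n) (Fin n) ℂ) := by
  set U := (hH.eigenvectorUnitary : Matrix (Fin n) (Fin n) ℂ) with hU
  have hUs : star U * U = 1 := (Matrix.mem_unitaryGroup_iff').mp hH.eigenvectorUnitary.2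
  have hUsr : U * star U = 1 := (Matrix.mem_unitaryGroup_iff).mp hH.eigenvectorUnitary.2
  have hUinv : U⁻¹ = star U := Matrix.inv_eq_left_inv hUs
  have hUunit : IsUnit U := ⟨⟨U, star U, hUsr, hUs⟩, rfl⟩
  have h1 : (-s) • H = U * diagonal (fun i => ((-s : ℂ)) * (hH.eigenvalues i : ℂ)) * U⁻¹ := by
    rw [hUinv]
    conv_lhs => rw [hH.spectral_theorem, Unitary.conjStarAlgAut_apply, ← hU]
    rw [show ((-s : ℝ)) = ((algebraMap ℝ ℂ) (-s)).re from by simp]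
    rw [show ((((algebraMap ℝ ℂ) (-s)).re : ℝ)) •
          (U * diagonal (RCLike.ofReal ∘ hH.eigenvalues) * star U)
        = ((algebraMap ℝ ℂ) (-s)) • (U * diagonal (RCLike.ofReal ∘ hH.eigenvalues) * star U) from by
      rw [algebraMap_smul]; norm_num]
    rw [← smul_mul_assoc, ← mul_smul_comm, ← diagonal_smul]
    congr 1
    ext i j
    simp [Matrix.diagonal_apply, Function.comp, Complex.real_smul]
  have hd : (NormedSpace.exp fun i => ((-s : ℂ)) * (hH.eigenvalues i : ℂ))
      = fun i => (Real.exp (-s * hH.eigenvalues i) : ℂ) := by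
    rw [Pi.exp_def]
    funext i
    rw [← Complex.exp_eq_exp_ℂ, Complex.ofReal_exp]
    push_cast
    ring_nf
  rw [h1, Matrix.exp_conj U _ hUunit, Matrix.exp_diagonal, hUinv, hd]

lemma kmbTraceDiag {n : ℕ} (v w : Fin n → ℂ) (M : Matrix (Fin n) (Fin n) ℂ) :
    (diagonal v * Mᴴ * diagonal w * M).trace
      = ∑ i, ∑ j, v i * w j * ((starRingEnd ℂ) (M j i) * M j i) := by
  simp only [Matrix.trace, Matrix.diag, Matrix.mul_apply, Matrix.diagonal_apply,
    Matrix.conjTranspose_apply, ite_mul, zero_mul, Finset.sum_ite_eq, Finset.mem_univ, if_true,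
    Finset.sum_mul, Finset.mul_sum]
  apply Finset.sum_congr rfl; intro i _
  apply Finset.sum_congr rfl; intro j _
  simp only [Finset.sum_ite_eq, Finset.sum_ite_eq', Finset.mem_univ, if_true, mul_ite, mul_zero,
    ite_mul, zero_mul, RCLike.star_def]
  ring

lemma kmbTraceConj {n : ℕ} (U D1 D2 X Y : Matrix (Fin n) (Fin n) ℂ) :
    (U * D1 * star U * X * (U * D2 * star U) * Y).trace
      = (D1 * (star U * X * U) * D2 * (star U * Y * U)).trace := by
  rw [show (U * D1 * star U * X * (U * D2 * star U) * Y)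
      = U * (D1 * (star U * (X * (U * (D2 * (star U * Y)))))) from by
    simp only [Matrix.mul_assoc], Matrix.trace_mul_comm]
  simp only [Matrix.mul_assoc]

lemma kmbTraceConjOne {n : ℕ} (U D : Matrix (Fin n) (Fin n) ℂ) (h : star U * U = 1) :
    (U * D * star U).trace = D.trace := by
  rw [Matrix.trace_mul_comm, ← Matrix.mul_assoc, h, Matrix.one_mul]

lemma kmbTraceConjMul {n : ℕ} (U D Y : Matrix (Fin n) (Fin n) ℂ) :
    (U * D * star U * Y).trace = (D * (star U * Y * U)).trace := by
  rw [show (U * D * star U * Y) = U * (D * (star U * Y)) from by simp only [Matrix.mul_assoc],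
    Matrix.trace_mul_comm]
  simp only [Matrix.mul_assoc]

lemma kmbTraceDiagMul {n : ℕ} (v : Fin n → ℂ) (M : Matrix (Fin n) (Fin n) ℂ) :
    (diagonal v * M).trace = ∑ i, v i * M i i := by
  simp [Matrix.trace, Matrix.diag, Matrix.mul_apply, Matrix.diagonal_apply, ite_mul, zero_mul]

/-- The Kubo–Mori–Bogoliubov form associated to a Hamiltonian `H` and inverse
temperature `β`:
`⟨A,B⟩ = (1/β)∫_{λ∈[0,β]} tr(e^{−λH} A† e^{−(β−λ)H} B) dλ / Z − conj(tr(ρA)/Z)·(tr(ρB)/Z)`,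
with `ρ = e^{−βH}` and `Z = tr ρ`. -/
noncomputable def kmb {n : ℕ} (H : Matrix (Fin n) (Fin n) ℂ) (β : ℝ)
    (A B : Matrix (Fin n) (Fin n) ℂ) : ℂ :=
  (β : ℂ)⁻¹ *
      (∫ l in Set.Icc (0 : ℝ) β,
        (NormedSpace.exp ((-l) • H) * Aᴴ * NormedSpace.exp ((-(β - l)) • H) * B).trace) /
      (NormedSpace.exp ((-β) • H)).trace -
    starRingEnd ℂ
        ((NormedSpace.exp ((-β) • H) * A).trace / (NormedSpace.exp ((-β) • H)).trace) *
      ((NormedSpace.exp ((-β) • H) * B).trace / (NormedSpace.exp ((-β) • H)).trace)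

/-- **Positive semidefiniteness of the KMB form**: for Hermitian `H` and `β > 0`,
`⟨A,A⟩` is real and nonnegative for every matrix `A`. -/
theorem kmb_self_real_nonneg (n : ℕ) (hn : 1 ≤ n)
    (H : Matrix (Fin n) (Fin n) ℂ) (hH : H.IsHermitian) (β : ℝ) (hβ : 0 < β)
    (A : Matrix (Fin n) (Fin n) ℂ) :
    (kmb H β A A).im = 0 ∧ 0 ≤ (kmb H β A A).re := by
  set U := (hH.eigenvectorUnitary : Matrix (Fin n) (Fin n) ℂ) with hUdef
  have hUs : star U * U = 1 := (Matrix.mem_unitaryGroup_iff').mp hH.eigenvectorUnitary.2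
  set e := hH.eigenvalues with hedef
  set M := star U * A * U with hMdef
  have hMH : star U * Aᴴ * U = Mᴴ := by
    rw [hMdef]
    simp [Matrix.conjTranspose_mul, Matrix.mul_assoc, Matrix.star_eq_conjTranspose,
      Matrix.conjTranspose_conjTranspose]
  -- the real integrand
  set F : ℝ → ℝ := fun l =>
    ∑ i, ∑ j, Real.exp (-l * e i) * Real.exp (-(β - l) * e j) * Complex.normSq (M j i) with hFdef
  have hInt : ∀ l : ℝ,
      (NormedSpace.exp ((-l) • H) * Aᴴ * NormedSpace.exp ((-(β - l)) • H) * A).trace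
        = ((F l : ℝ) : ℂ) := by
    intro l
    rw [kmbExpEig hH l, kmbExpEig hH (β - l), ← hUdef, ← hedef, kmbTraceConj, hMH, ← hMdef,
      kmbTraceDiag, hFdef]
    push_cast
    simp only [Complex.normSq_eq_conj_mul_self]
  have hZ : (NormedSpace.exp ((-β) • H)).trace = ((∑ i, Real.exp (-β * e i) : ℝ) : ℂ) := by
    rw [kmbExpEig hH β, ← hUdef, ← hedef, kmbTraceConjOne _ _ hUs, Matrix.trace_diagonal]
    push_cast
    rfl
  have hT : (NormedSpace.exp ((-β) • H) * A).trace
      = ∑ i, (Real.exp (-β * e i) : ℂ) * M i i := by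
    rw [kmbExpEig hH β, ← hUdef, ← hedef, kmbTraceConjMul _ _ _, ← hMdef, kmbTraceDiagMul _ _]
  set Zr := ∑ i, Real.exp (-β * e i) with hZrdef
  set c := ∑ i, Real.exp (-β * e i) * Complex.normSq (M i i) with hcdef
  set t := ∑ i, (Real.exp (-β * e i) : ℂ) * M i i with htdef
  set IF := ∫ l in Set.Icc (0 : ℝ) β, F l with hIFdef
  have hkmb : kmb H β A A = ((β⁻¹ * IF / Zr - Complex.normSq t / Zr ^ 2 : ℝ) : ℂ) := by
    rw [kmb]
    simp only [hInt, hZ, hT, ← htdef]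
    rw [show (∫ l in Set.Icc (0 : ℝ) β, ((F l : ℝ) : ℂ)) = ((IF : ℝ) : ℂ) from by
      rw [hIFdef]; exact integral_ofReal]
    have h2 : (starRingEnd ℂ) (t / ((Zr : ℝ) : ℂ)) * (t / ((Zr : ℝ) : ℂ))
        = ((Complex.normSq t / Zr ^ 2 : ℝ) : ℂ) := by
      rw [← Complex.normSq_eq_conj_mul_self, Complex.normSq_div]
      push_cast [Complex.normSq_ofReal]
      ring
    rw [h2]
    push_cast
    ring
  have hZr : 0 < Zr := Finset.sum_pos (fun i _ => Real.exp_pos _)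
    ⟨⟨0, hn⟩, Finset.mem_univ _⟩
  have hc : 0 ≤ c := Finset.sum_nonneg fun i _ =>
    mul_nonneg (Real.exp_pos _).le (Complex.normSq_nonneg _)
  have hFcont : Continuous F := by
    apply continuous_finset_sum; intro i _
    apply continuous_finset_sum; intro j _
    fun_prop
  have hFc : ∀ l ∈ Set.Icc (0 : ℝ) β, c ≤ F l := by
    intro l _
    rw [hcdef, hFdef]
    apply Finset.sum_le_sum
    intro i _
    calc Real.exp (-β * e i) * Complex.normSq (M i i)
        = Real.exp (-l * e i) * Real.exp (-(β - l) * e i) * Complex.normSq (M i i) := by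
          rw [show -β * e i = -l * e i + -(β - l) * e i from by ring, Real.exp_add]
      _ ≤ ∑ j, Real.exp (-l * e i) * Real.exp (-(β - l) * e j) * Complex.normSq (M j i) := by
          apply Finset.single_le_sum (f := fun j =>
            Real.exp (-l * e i) * Real.exp (-(β - l) * e j) * Complex.normSq (M j i))
            (fun j _ => mul_nonneg (mul_nonneg (Real.exp_pos _).le (Real.exp_pos _).le)
              (Complex.normSq_nonneg _)) (Finset.mem_univ i)
  have hIF : β * c ≤ IF := by
    have h1 : ∫ _ in Set.Icc (0 : ℝ) β, c = β * c := by
      rw [MeasureTheory.setIntegral_const, Real.volume_real_Icc_of_le hβ.le, smul_eq_mul, sub_zero]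
    calc β * c = ∫ _ in Set.Icc (0 : ℝ) β, c := h1.symm
      _ ≤ IF := by
          apply MeasureTheory.setIntegral_mono_on ((integrableOn_const_iff (C := c)).mpr ?_)
            (hFcont.integrableOn_Icc) measurableSet_Icc hFc
          right
          rw [Real.volume_Icc]
          exact ENNReal.ofReal_lt_top
  have ht : Complex.normSq t ≤ Zr * c := by
    have h1 : ‖t‖ ≤ ∑ i, Real.exp (-β * e i) * ‖M i i‖ := by
      refine (norm_sum_le _ _).trans_eq ?_
      apply Finset.sum_congr rfl
      intro i _
      rw [norm_mul, Complex.norm_real, Real.norm_eq_abs, abs_of_pos (Real.exp_pos _)]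
    have CS := Finset.sum_mul_sq_le_sq_mul_sq Finset.univ
      (fun i => Real.sqrt (Real.exp (-β * e i)))
      (fun i => Real.sqrt (Real.exp (-β * e i)) * ‖M i i‖)
    have hsimp1 : ∀ i : Fin n, Real.sqrt (Real.exp (-β * e i)) *
        (Real.sqrt (Real.exp (-β * e i)) * ‖M i i‖)
        = Real.exp (-β * e i) * ‖M i i‖ := by
      intro i
      rw [← mul_assoc, Real.mul_self_sqrt (Real.exp_pos _).le]
    have hsimp2 : ∀ i : Fin n, Real.sqrt (Real.exp (-β * e i)) ^ 2 = Real.exp (-β * e i) :=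
      fun i => Real.sq_sqrt (Real.exp_pos _).le
    have hsimp3 : ∀ i : Fin n, (Real.sqrt (Real.exp (-β * e i)) * ‖M i i‖) ^ 2
        = Real.exp (-β * e i) * Complex.normSq (M i i) := by
      intro i
      rw [mul_pow, hsimp2 i, Complex.sq_norm]
    rw [Finset.sum_congr rfl (fun i _ => hsimp1 i), Finset.sum_congr rfl (fun i _ => hsimp2 i),
      Finset.sum_congr rfl (fun i _ => hsimp3 i)] at CS
    calc Complex.normSq t = ‖t‖ ^ 2 := (Complex.sq_norm t).symm
      _ ≤ (∑ i, Real.exp (-β * e i) * ‖M i i‖) ^ 2 := by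
          apply pow_le_pow_left₀ (norm_nonneg _) h1
      _ ≤ Zr * c := CS
  constructor
  · rw [hkmb]; exact Complex.ofReal_im _
  · rw [hkmb, Complex.ofReal_re]
    have h2 : Complex.normSq t / Zr ^ 2 ≤ c / Zr := by
      rw [div_le_div_iff₀ (by positivity) hZr]
      nlinarith
    have hcineq : c ≤ β⁻¹ * IF := by
      rw [inv_mul_eq_div, le_div_iff₀ hβ]
      linarith
    have h3 : c / Zr ≤ β⁻¹ * IF / Zr := (div_le_div_iff_of_pos_right hZr).mpr hcineq
    linarith
end

section
/- Let n ≥ 1, let H be a Hermitian n×n complex matrix and β > 0, and let ⟨·,·⟩ denote the associated Kubo–Mori–Bogoliubov form on n×n complex matrices. Let Q, Q' be n×n complex matrices and ω, ω' ∈ ℝ with ω ≠ ω', such that H·Q − Q·H = ω•Q and H·Q' − Q'·H = ω'•Q'. Then ⟨Q, Q'⟩ = 0; i.e., dynamical symmetries with distinct frequencies have vanishing KMB overlap. -/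
/-!
A dynamical symmetry `X` of frequency `c` satisfies `exp (t • H) * X = e^{t c} • (X * exp (t • H))`,
so cyclicity of the trace gives `tr (exp (t • H) * X) = e^{t c} tr (exp (t • H) * X)`: the trace
vanishes as soon as `e^{t c} ≠ 1`. Moving `Qᴴ` (frequency `-ω`) through the first exponential of
the KMB integrand and cycling the trace turns the integrand into a multiple of
`tr (exp (-β • H) * (Q' * Qᴴ))`, where `Q' * Qᴴ` has frequency `ω' - ω ≠ 0`; so the integral
vanishes. Likewise one of `tr (ρ Q)`, `tr (ρ Q')` vanishes, since `ω` and `ω'` cannot both be `0`.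
-/

open MeasureTheory Matrix

attribute [local instance] Matrix.linftyOpNormedAddCommGroup Matrix.linftyOpNormedSpace
  Matrix.linftyOpNormedRing Matrix.linftyOpNormedAlgebra

open NormedSpace

def IsDynamicalSymmetry {R A : Type*} [Ring A] [SMul R A] (H X : A) (c : R) : Prop :=
  H * X - X * H = c • X

theorem Complex.exp_ofReal_ne_one {x : ℝ} (hx : x ≠ 0) : Complex.exp x ≠ 1 := by
  rw [← Complex.ofReal_exp, Ne, Complex.ofReal_eq_one, Real.exp_eq_one_iff]
  exact hx

namespace IsDynamicalSymmetry

section Algebra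

variable {R A : Type*} [CommRing R] [Ring A] [Algebra R A] {H X Y : A} {a b : R}

theorem semiconjBy (h : IsDynamicalSymmetry H X a) :
    SemiconjBy X (H + algebraMap R A a) H := by
  rw [SemiconjBy, mul_add, ← Algebra.commutes, ← Algebra.smul_def, ← h]
  abel

theorem mul (hX : IsDynamicalSymmetry H X a) (hY : IsDynamicalSymmetry H Y b) :
    IsDynamicalSymmetry H (X * Y) (a + b) :=
  calc H * (X * Y) - X * Y * H = (H * X - X * H) * Y + X * (H * Y - Y * H) := by noncomm_ring
    _ = (a + b) • (X * Y) := by rw [hX, hY, smul_mul_assoc, mul_smul_comm, add_smul]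

theorem star [StarRing R] [StarRing A] [StarModule R A] (hH : IsSelfAdjoint H)
    (h : IsDynamicalSymmetry H X a) : IsDynamicalSymmetry H (star X) (-star a) := by
  unfold IsDynamicalSymmetry at h ⊢
  have h' := congrArg Star.star h
  rw [star_sub, star_mul, star_mul, hH.star_eq, star_smul] at h'
  rw [neg_smul, ← h']
  abel

end Algebra

theorem exp_smul_mul {A : Type*} [NormedRing A] [NormedAlgebra ℂ A] [NormedAlgebra ℚ A]
    [CompleteSpace A] {H X : A} {c : ℂ} (h : IsDynamicalSymmetry H X c) (t : ℂ) :
    exp (t • H) * X = Complex.exp (t * c) • (X * exp (t • H)) := by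
  have hsemi : SemiconjBy X (t • H + algebraMap ℂ A (t * c)) (t • H) := by
    simpa [smul_add, map_mul, Algebra.smul_def, mul_add] using h.semiconjBy.smul_right t
  rw [← hsemi.exp_right.eq, NormedSpace.exp_add_of_commute (Algebra.commutes _ _).symm,
    ← algebraMap_exp_comm, ← Complex.exp_eq_exp_ℂ, ← Algebra.commutes, ← Algebra.smul_def, mul_smul_comm]

section Matrix

variable {m : Type*} [Fintype m] [DecidableEq m] {H X Y : Matrix m m ℂ} {a b c : ℂ}

theorem trace_exp_smul_mul_eq_zero (h : IsDynamicalSymmetry H X c) {t : ℂ}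
    (ht : Complex.exp (t * c) ≠ 1) : (exp (t • H) * X).trace = 0 := by
  -- `rw [h.exp_smul_mul]` fails: the general lemma reaches the matrix ring and topology through
  -- the operator-norm instances, which are defeq but not syntactically equal to the matrix ones.
  have hmove : exp (t • H) * X = Complex.exp (t * c) • (X * exp (t • H)) := h.exp_smul_mul t
  have hcycle : Complex.exp (t * c) * (exp (t • H) * X).trace = (exp (t • H) * X).trace := by
    conv_rhs => rw [hmove, trace_smul, trace_mul_comm, smul_eq_mul]
  by_contra hne
  exact ht ((mul_eq_right₀ hne).1 hcycle)

theorem trace_exp_smul_mul_exp_smul_mul_eq_zero (hX : IsDynamicalSymmetry H X a)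
    (hY : IsDynamicalSymmetry H Y b) {s t : ℂ} (hst : Complex.exp ((s + t) * (b + a)) ≠ 1) :
    (exp (s • H) * X * exp (t • H) * Y).trace = 0 := by
  have hexp : exp (s • H) * exp (t • H) = exp ((s + t) • H) := by
    rw [add_smul, Matrix.exp_add_of_commute _ _ (((Commute.refl H).smul_left s).smul_right t)]
  have hmove : exp (s • H) * X = Complex.exp (s * a) • (X * exp (s • H)) := hX.exp_smul_mul s
  rw [hmove, smul_mul_assoc, smul_mul_assoc, trace_smul, mul_assoc X, hexp,
    trace_mul_cycle, ← trace_mul_comm, (hY.mul hX).trace_exp_smul_mul_eq_zero hst, smul_zero]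

end Matrix

end IsDynamicalSymmetry

theorem kmb_orthogonal_distinct_frequencies_general (n : ℕ)
    (H : Matrix (Fin n) (Fin n) ℂ) (hH : H.IsHermitian) (β : ℝ) (hβ : 0 < β)
    (Q Q' : Matrix (Fin n) (Fin n) ℂ) (ω ω' : ℝ) (hωω' : ω ≠ ω')
    (hQ : H * Q - Q * H = (ω : ℂ) • Q) (hQ' : H * Q' - Q' * H = (ω' : ℂ) • Q') :
    kmb H β Q Q' = 0 := by
  have hQ_dyn : IsDynamicalSymmetry H Q (ω : ℂ) := hQ
  have hQ'_dyn : IsDynamicalSymmetry H Q' (ω' : ℂ) := hQ'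
  have hQH_dyn : IsDynamicalSymmetry H Qᴴ (-ω : ℂ) := by
    simpa [star_eq_conjTranspose] using hQ_dyn.star hH.isSelfAdjoint
  have hexp_ne_one (μ : ℝ) (hμ : μ ≠ 0) : Complex.exp ((-β : ℝ) * μ) ≠ 1 := by
    exact_mod_cast Complex.exp_ofReal_ne_one (mul_ne_zero (neg_ne_zero.2 hβ.ne') hμ)
  have hintegrand (l : ℝ) :
      (exp ((-l) • H) * Qᴴ * exp ((-(β - l)) • H) * Q').trace = 0 := by
    simp only [← Complex.coe_smul]
    refine hQH_dyn.trace_exp_smul_mul_exp_smul_mul_eq_zero hQ'_dyn ?_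
    convert hexp_ne_one _ (sub_ne_zero.2 hωω'.symm) using 2
    push_cast
    ring
  have hmean {X : Matrix (Fin n) (Fin n) ℂ} {μ : ℝ} (hμ : μ ≠ 0)
      (hX : IsDynamicalSymmetry H X (μ : ℂ)) : (exp ((-β) • H) * X).trace = 0 := by
    rw [← Complex.coe_smul]
    exact hX.trace_exp_smul_mul_eq_zero (hexp_ne_one μ hμ)
  unfold kmb
  simp only [hintegrand, integral_zero, mul_zero, zero_div, zero_sub, neg_eq_zero, mul_eq_zero,
    div_eq_zero_iff, map_eq_zero]
  rcases eq_or_ne ω 0 with hω | hω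
  · exact Or.inr (Or.inl (hmean (hω ▸ hωω').symm hQ'_dyn))
  · exact Or.inl (Or.inl (hmean hω hQ_dyn))

/-- **Orthogonality of dynamical symmetries with distinct frequencies**: if
`[H,Q] = ω Q` and `[H,Q'] = ω' Q'` with real `ω ≠ ω'`, then `⟨Q, Q'⟩ = 0` for the
KMB form of the Hermitian Hamiltonian `H` at inverse temperature `β > 0`. -/
theorem kmb_orthogonal_distinct_frequencies (n : ℕ) (hn : 1 ≤ n)
    (H : Matrix (Fin n) (Fin n) ℂ) (hH : H.IsHermitian) (β : ℝ) (hβ : 0 < β)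
    (Q Q' : Matrix (Fin n) (Fin n) ℂ) (ω ω' : ℝ) (hωω' : ω ≠ ω')
    (hQ : H * Q - Q * H = (ω : ℂ) • Q) (hQ' : H * Q' - Q' * H = (ω' : ℂ) • Q') :
    kmb H β Q Q' = 0 :=
  kmb_orthogonal_distinct_frequencies_general n H hH β hβ Q Q' ω ω' hωω' hQ hQ'
end

section
/- Let E be a complex Hilbert space with inner product ⟪·,·⟫ (conjugate-linear in the first argument), and let U : ℝ → (E →ₗᵢ[ℂ] E) be a one-parameter group of linear isometries (U_0 = id, U_{s+t} = U_s ∘ U_t). Let ω ∈ ℝ, let A ∈ E with t ↦ U_t A continuous, and let Q : Fin n → E satisfy U_t (Q j) = exp(iωt) • Q j for all t ∈ ℝ and all j. Assume the Gram matrix G ∈ Matrix (Fin n) (Fin n) ℂ, G j l = ⟪Q j, Q l⟫, is invertible, and set v j = ⟪Q j, A⟫. Then for every T > 0, the number (1/T²)∫_{t₁∈[0,T]}∫_{t₂∈[0,T]} exp(iω(t₁−t₂))·⟪U_{t₁}A, U_{t₂}A⟫ dt₂ dt₁ is real and nonnegative, the number star(v) ⬝ᵥ (G⁻¹ *ᵥ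 v) is real and nonnegative, and (1/T²)∫∫ exp(iω(t₁−t₂))·⟪U_{t₁}A, U_{t₂}A⟫ ≥ star(v) ⬝ᵥ (G⁻¹ *ᵥ v). (Finite-time Mazur-type lower bound on the Fourier component at frequency ω of the dynamical autocorrelation in terms of dynamical symmetries Q j of frequency ω.) -/
open MeasureTheory Matrix

set_option maxHeartbeats 1000000 in
/-- **Finite-time Mazur-type bound on AC response functions.**
Let `U` be a one-parameter group of linear isometries of a complex Hilbert space
(abstracting the Heisenberg evolution w.r.t. the KMB inner ℂ product of a stationary
state), and let `Q j` be dynamical symmetries of frequency `ω`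
(`U t (Q j) = e^{iωt} Q j`) with invertible Gram matrix `G`.  Then for every `T > 0`
the Fourier component `(1/T²)∫₀ᵀ∫₀ᵀ e^{iω(t₁−t₂)} ⟪U t₁ A, U t₂ A⟫` is real and
nonnegative, the Mazur bound `v† G⁻¹ v` (with `v j = ⟪Q j, A⟫`) is real and
nonnegative, and the former dominates the latter. -/
theorem mazur_bound_AC_response
    (E : Type*) [NormedAddCommGroup E] [InnerProductSpace ℂ E] [CompleteSpace E]
    (U : ℝ → (E →ₗᵢ[ℂ] E))
    (hU0 : U 0 = LinearIsometry.id)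
    (hUadd : ∀ s t : ℝ, U (s + t) = (U s).comp (U t))
    (ω : ℝ) (A : E) (hA : Continuous fun t : ℝ => U t A)
    (n : ℕ) (Q : Fin n → E)
    (hQ : ∀ (t : ℝ) (j : Fin n), U t (Q j) = Complex.exp (Complex.I * ω * t) • Q j)
    (G : Matrix (Fin n) (Fin n) ℂ)
    (hG : G = Matrix.of fun j l => (inner ℂ (Q j) (Q l) : ℂ))
    (hGinv : IsUnit G.det)
    (v : Fin n → ℂ) (hv : v = fun j => (inner ℂ (Q j) A : ℂ))
    (T : ℝ) (hT : 0 < T) :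
    (((T : ℂ) ^ 2)⁻¹ * ∫ t₁ in Set.Icc (0 : ℝ) T, ∫ t₂ in Set.Icc (0 : ℝ) T,
          Complex.exp (Complex.I * ω * ((t₁ : ℂ) - (t₂ : ℂ))) *
            (inner ℂ (U t₁ A) (U t₂ A) : ℂ)).im = 0 ∧
    0 ≤ (((T : ℂ) ^ 2)⁻¹ * ∫ t₁ in Set.Icc (0 : ℝ) T, ∫ t₂ in Set.Icc (0 : ℝ) T,
          Complex.exp (Complex.I * ω * ((t₁ : ℂ) - (t₂ : ℂ))) *
            (inner ℂ (U t₁ A) (U t₂ A) : ℂ)).re ∧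
    (star v ⬝ᵥ (G⁻¹ *ᵥ v)).im = 0 ∧
    0 ≤ (star v ⬝ᵥ (G⁻¹ *ᵥ v)).re ∧
    (star v ⬝ᵥ (G⁻¹ *ᵥ v)).re ≤
      (((T : ℂ) ^ 2)⁻¹ * ∫ t₁ in Set.Icc (0 : ℝ) T, ∫ t₂ in Set.Icc (0 : ℝ) T,
          Complex.exp (Complex.I * ω * ((t₁ : ℂ) - (t₂ : ℂ))) *
            (inner ℂ (U t₁ A) (U t₂ A) : ℂ)).re := by
  classical
  set f : ℝ → E := fun t => Complex.exp (-(Complex.I * ω * t)) • U t A with hfdef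
  have hfc : Continuous f := by
    apply Continuous.smul _ hA
    exact Complex.continuous_exp.comp (by continuity)
  have hfi : IntegrableOn f (Set.Icc (0:ℝ) T) := hfc.integrableOn_Icc
  set B : E := ∫ t in Set.Icc (0:ℝ) T, f t with hBdef
  -- group inverse
  have hUinv : ∀ (t : ℝ) (x : E), U t (U (-t) x) = x := by
    intro t x
    have h := hUadd t (-t)
    rw [add_neg_cancel, hU0] at h
    have := congrArg (fun L : E →ₗᵢ[ℂ] E => L x) h
    simpa using this.symm
  -- inner ℂ products with Q
  have hQA : ∀ (t : ℝ) (j : Fin n),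
      (inner ℂ (Q j) (U t A) : ℂ) = Complex.exp (Complex.I * ω * t) * v j := by
    intro t j
    have h1 : (inner ℂ (Q j) (U t A) : ℂ) = inner ℂ (U (-t) (Q j)) A := by
      conv_lhs => rw [← hUinv t (Q j)]
      exact (U t).inner_map_map _ _
    rw [h1, hQ (-t) j, inner_smul_left]
    have hc : (starRingEnd ℂ) (Complex.exp (Complex.I * ω * ((-t : ℝ) : ℂ))) =
        Complex.exp (Complex.I * ω * t) := by
      rw [← Complex.exp_conj]
      congr 1
      simp only [_root_.map_mul, map_neg, Complex.conj_I, Complex.conj_ofReal]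
      push_cast; ring
    rw [hc, hv]
  have hfQ : ∀ (t : ℝ) (j : Fin n), (inner ℂ (Q j) (f t) : ℂ) = v j := by
    intro t j
    rw [hfdef]
    simp only [inner_smul_right]
    rw [hQA t j, ← mul_assoc, ← Complex.exp_add]
    simp
  have hQB : ∀ j : Fin n, (inner ℂ (Q j) B : ℂ) = (T : ℂ) * v j := by
    intro j
    have h1 : (inner ℂ (Q j) B : ℂ) = ∫ t in Set.Icc (0:ℝ) T, (inner ℂ (Q j) (f t) : ℂ) :=
      ((innerSL ℂ (Q j)).integral_comp_comm hfi).symm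
    rw [h1]
    calc (∫ t in Set.Icc (0:ℝ) T, (inner ℂ (Q j) (f t) : ℂ))
        = ∫ _t in Set.Icc (0:ℝ) T, v j := by
          apply setIntegral_congr_fun (by measurability)
          intro t _; exact hfQ t j
      _ = (T : ℂ) * v j := by
          rw [setIntegral_const]
          simp [Real.volume_Icc, hT.le, Complex.real_smul]
  -- the double integral is ⟪B,B⟫
  have hinner_ff : ∀ t₁ t₂ : ℝ, (inner ℂ (f t₁) (f t₂) : ℂ) =
      Complex.exp (Complex.I * ω * ((t₁ : ℂ) - (t₂ : ℂ))) * (inner ℂ (U t₁ A) (U t₂ A) : ℂ) := by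
    intro t₁ t₂
    rw [hfdef]
    simp only [inner_smul_left, inner_smul_right]
    rw [← Complex.exp_conj, ← mul_assoc, ← Complex.exp_add]
    congr 2
    simp only [_root_.map_mul, map_neg, Complex.conj_I, Complex.conj_ofReal]
    ring
  have hkey : (∫ t₁ in Set.Icc (0:ℝ) T, ∫ t₂ in Set.Icc (0:ℝ) T,
      Complex.exp (Complex.I * ω * ((t₁ : ℂ) - (t₂ : ℂ))) * (inner ℂ (U t₁ A) (U t₂ A) : ℂ))
      = ((‖B‖ ^ 2 : ℝ) : ℂ) := by
    have h1 : ∀ t₁ : ℝ, (∫ t₂ in Set.Icc (0:ℝ) T,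
        Complex.exp (Complex.I * ω * ((t₁ : ℂ) - (t₂ : ℂ))) * (inner ℂ (U t₁ A) (U t₂ A) : ℂ))
        = (inner ℂ (f t₁) B : ℂ) := by
      intro t₁
      rw [show (∫ t₂ in Set.Icc (0:ℝ) T,
          Complex.exp (Complex.I * ω * ((t₁ : ℂ) - (t₂ : ℂ))) * (inner ℂ (U t₁ A) (U t₂ A) : ℂ))
          = ∫ t₂ in Set.Icc (0:ℝ) T, (inner ℂ (f t₁) (f t₂) : ℂ) from by
        apply setIntegral_congr_fun (by measurability)
        intro t₂ _; exact (hinner_ff t₁ t₂).symm]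
      exact (innerSL ℂ (f t₁)).integral_comp_comm hfi
    calc (∫ t₁ in Set.Icc (0:ℝ) T, ∫ t₂ in Set.Icc (0:ℝ) T,
          Complex.exp (Complex.I * ω * ((t₁ : ℂ) - (t₂ : ℂ))) * (inner ℂ (U t₁ A) (U t₂ A) : ℂ))
        = ∫ t₁ in Set.Icc (0:ℝ) T, (inner ℂ (f t₁) B : ℂ) := by
          apply setIntegral_congr_fun (by measurability)
          intro t₁ _; exact h1 t₁
      _ = ∫ t₁ in Set.Icc (0:ℝ) T, (starRingEnd ℂ) (inner ℂ B (f t₁) : ℂ) := by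
          apply setIntegral_congr_fun (by measurability)
          intro t₁ _
          exact (inner_conj_symm (f t₁) B).symm
      _ = (starRingEnd ℂ) (∫ t₁ in Set.Icc (0:ℝ) T, (inner ℂ B (f t₁) : ℂ)) := integral_conj
      _ = (starRingEnd ℂ) (inner ℂ B B : ℂ) := by
          congr 1
          exact (innerSL ℂ B).integral_comp_comm hfi
      _ = (inner ℂ B B : ℂ) := inner_conj_symm B B
      _ = ((‖B‖ ^ 2 : ℝ) : ℂ) := by rw [inner_self_eq_norm_sq_to_K]; norm_cast
  -- matrix algebra
  set c : Fin n → ℂ := G⁻¹ *ᵥ v with hcdef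
  set C : E := ∑ j, c j • Q j with hCdef
  have hGc : G *ᵥ c = v := by
    rw [hcdef, Matrix.mulVec_mulVec, Matrix.mul_nonsing_inv G hGinv, Matrix.one_mulVec]
  have hCx : ∀ x : E, (inner ℂ C x : ℂ) = ∑ j, (starRingEnd ℂ) (c j) * (inner ℂ (Q j) x : ℂ) := by
    intro x
    rw [hCdef, sum_inner]
    simp only [inner_smul_left]
  have hQC : ∀ l, (inner ℂ (Q l) C : ℂ) = v l := by
    intro l
    rw [hCdef, inner_sum]
    simp only [inner_smul_right]
    rw [← hGc]
    simp only [Matrix.mulVec, dotProduct, hG, Matrix.of_apply]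
    exact Finset.sum_congr rfl fun j _ => mul_comm _ _
  have hQD : ∀ l, (inner ℂ (Q l) (B - (T : ℂ) • C) : ℂ) = 0 := by
    intro l
    rw [inner_sub_right, inner_smul_right, hQB l, hQC l, sub_self]
  have hCD : (inner ℂ C (B - (T : ℂ) • C) : ℂ) = 0 := by
    rw [hCx]
    exact Finset.sum_eq_zero fun j _ => by rw [hQD j, mul_zero]
  have hCC : (inner ℂ C C : ℂ) = ∑ j, (starRingEnd ℂ) (c j) * v j := by
    rw [hCx]
    exact Finset.sum_congr rfl fun j _ => by rw [hQC j]
  -- the Mazur quantity equals ‖C‖²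
  have hM : star v ⬝ᵥ (G⁻¹ *ᵥ v) = ((‖C‖ ^ 2 : ℝ) : ℂ) := by
    have h1 : star v ⬝ᵥ c = (starRingEnd ℂ) (∑ j, (starRingEnd ℂ) (c j) * v j) := by
      rw [map_sum]
      simp only [dotProduct, Pi.star_apply, RCLike.star_def, _root_.map_mul,
        Complex.conj_conj]
      exact Finset.sum_congr rfl fun j _ => mul_comm _ _
    rw [← hcdef, h1, ← hCC, inner_conj_symm, inner_self_eq_norm_sq_to_K]
    norm_cast
  clear_value B C
  -- Pythagoras
  have hpyth : ‖C‖ ^ 2 * T ^ 2 ≤ ‖B‖ ^ 2 := by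
    have hB2 : ‖B‖ ^ 2 = ‖(T : ℂ) • C‖ ^ 2
        + 2 * Complex.re (inner ℂ ((T:ℂ) • C) (B - (T:ℂ) • C) : ℂ)
        + ‖B - (T : ℂ) • C‖ ^ 2 := by
      have h := norm_add_sq (𝕜 := ℂ) ((T : ℂ) • C) (B - (T : ℂ) • C)
      rw [show (T : ℂ) • C + (B - (T : ℂ) • C) = B by abel] at h
      exact h
    have hz : (inner ℂ ((T:ℂ) • C) (B - (T:ℂ) • C) : ℂ) = 0 := by
      rw [inner_smul_left, hCD, mul_zero]
    rw [hz] at hB2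
    simp only [Complex.zero_re, mul_zero, add_zero] at hB2
    have hTC : ‖(T : ℂ) • C‖ ^ 2 = ‖C‖ ^ 2 * T ^ 2 := by
      rw [norm_smul, Complex.norm_real, Real.norm_eq_abs, abs_of_pos hT]
      ring
    rw [hTC] at hB2
    nlinarith [sq_nonneg (‖B - (T : ℂ) • C‖)]
  -- conclusion
  have hI : (((T : ℂ) ^ 2)⁻¹ * ∫ t₁ in Set.Icc (0 : ℝ) T, ∫ t₂ in Set.Icc (0 : ℝ) T,
      Complex.exp (Complex.I * ω * ((t₁ : ℂ) - (t₂ : ℂ))) * (inner ℂ (U t₁ A) (U t₂ A) : ℂ))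
      = (((T ^ 2)⁻¹ * ‖B‖ ^ 2 : ℝ) : ℂ) := by
    rw [hkey]; push_cast; ring
  rw [hI, hM]
  have hle : ‖C‖ ^ 2 ≤ (T ^ 2)⁻¹ * ‖B‖ ^ 2 := by
    rw [le_inv_mul_iff₀ (by positivity)]
    nlinarith [hpyth]
  refine ⟨Complex.ofReal_im _, ?_, Complex.ofReal_im _, ?_, ?_⟩
  · rw [Complex.ofReal_re]; positivity
  · rw [Complex.ofReal_re]; positivity
  · rw [Complex.ofReal_re, Complex.ofReal_re]; exact hle
end

section
/- Let E be a complex Hilbert space with inner product ⟪·,·⟫ (conjugate-linear in the first argument), and let U : ℝ → (E →ₗᵢ[ℂ] E) be a one-parameter group of linear isometries (U_0 = id, U_{s+t} = U_s ∘ U_t). Let ω ∈ ℝ, let A ∈ E with t ↦ U_t A continuous, and let Q : Fin n → E satisfy U_t (Q j) = exp(iω_j t) • Q j for all t ∈ ℝ and all j, with frequencies ω_j ∈ ℝ. Then for every T > 0 and every choice of coefficients α : Fin n → ℂ: (1/T²)∫_{t₁∈[0,T]}∫_{t₂∈[0,T]} exp(iω(t₁−t₂))·⟪U_{t₁}A,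 U_{t₂}A⟫ dt₂ dt₁ ≥ ∑_j 2·Re[ α_j · ((1/T)∫_{t∈[0,T]} exp(i(ω−ω_j)t) dt) · ⟪A, Q j⟫ ] − ∑_{j,l} Re[ conj(α_j)·α_l·⟪Q j, Q l⟫ ]. (This is the paper's inequality (cond), obtained from nonnegativity of the norm of O_A(ω) = (1/T)∫_0^T e^{−iωt}U_tA dt − ∑_j α_j Q_j, before optimizing over α.) -/
/-!
The double integral is `⟪O, O⟫` for the Fourier average `O = (1/T) ∫₀ᵀ e^{-iωt} U_t A dt`, so it
is real. Since `U_t` is an isometry and `U_t Q_j = e^{iω_j t} Q_j`, we get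
`⟪U_t A, Q_j⟫ = e^{-iω_j t} ⟪A, Q_j⟫`, which turns `⟪O, Q_j⟫` into the scalar average in the
statement. The inequality is then `‖O - ∑ α_j Q_j‖² ≥ 0` expanded.
-/

open MeasureTheory ComplexConjugate

section InnerIntegral

variable {α β 𝕜 E : Type*} [RCLike 𝕜] [NormedAddCommGroup E] [InnerProductSpace 𝕜 E]
  [NormedSpace ℝ E] [CompleteSpace E] [MeasurableSpace α] [MeasurableSpace β]
  {μ : Measure α} {ν : Measure β}

theorem inner_integral_left {f : α → E} (hf : Integrable f μ) (c : E) :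
    inner 𝕜 (∫ x, f x ∂μ) c = ∫ x, inner 𝕜 (f x) c ∂μ := by
  rw [← inner_conj_symm, ← integral_inner hf, ← integral_conj]
  simp only [inner_conj_symm]

theorem inner_integral_integral {f : α → E} {g : β → E} (hf : Integrable f μ)
    (hg : Integrable g ν) :
    inner 𝕜 (∫ x, f x ∂μ) (∫ y, g y ∂ν) = ∫ x, ∫ y, inner 𝕜 (f x) (g y) ∂ν ∂μ := by
  simp only [inner_integral_left hf, integral_inner hg]

end InnerIntegral

section InnerProductSpace

variable {𝕜 E : Type*} [RCLike 𝕜] [NormedAddCommGroup E] [InnerProductSpace 𝕜 E]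

theorem two_mul_re_inner_sub_re_inner_self_le (x y : E) :
    2 * RCLike.re (inner 𝕜 x y) - RCLike.re (inner 𝕜 y y) ≤ RCLike.re (inner 𝕜 x x) := by
  have := norm_sub_sq (𝕜 := 𝕜) x y
  rw [inner_self_eq_norm_sq, inner_self_eq_norm_sq]
  nlinarith [sq_nonneg ‖x - y‖]

theorem inner_sum_smul_sum_smul {ι κ : Type*} (s : Finset ι) (t : Finset κ) (a : ι → 𝕜)
    (b : κ → 𝕜) (v : ι → E) (w : κ → E) :
    inner 𝕜 (∑ i ∈ s, a i • v i) (∑ j ∈ t, b j • w j) =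
      ∑ i ∈ s, ∑ j ∈ t, conj (a i) * b j * inner 𝕜 (v i) (w j) := by
  rw [sum_inner]
  refine Finset.sum_congr rfl fun i _ => ?_
  rw [inner_smul_left, inner_sum, Finset.mul_sum]
  refine Finset.sum_congr rfl fun j _ => ?_
  rw [inner_smul_right]
  ring

theorem LinearIsometry.inner_map_left_of_apply_eq_smul (L : E →ₗᵢ[𝕜] E) {Q : E} {c : 𝕜}
    (hc : c ≠ 0) (hQ : L Q = c • Q) (A : E) :
    inner 𝕜 (L A) Q = c⁻¹ * inner 𝕜 A Q := by
  rw [← L.inner_map_map A Q, hQ, inner_smul_right, inv_mul_cancel_left₀ hc]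

end InnerProductSpace

section FourierAverage

variable {E : Type*} [NormedAddCommGroup E] [InnerProductSpace ℂ E] [CompleteSpace E]

/-- The paper's `O_A(ω)` is `fourierAverage (fun t => U t A) ω T`. -/
noncomputable def fourierAverage (f : ℝ → E) (ω T : ℝ) : E :=
  (T : ℂ)⁻¹ • ∫ t in Set.Icc 0 T, Complex.exp (-(Complex.I * ω * t)) • f t

theorem conj_exp_neg_I_mul (ω t : ℝ) :
    conj (Complex.exp (-(Complex.I * ω * t))) = Complex.exp (Complex.I * ω * t) := by
  rw [← Complex.exp_conj]
  simp

variable {f : ℝ → E}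

theorem inner_fourierAverage_self (hf : Continuous f) (ω T : ℝ) :
    inner ℂ (fourierAverage f ω T) (fourierAverage f ω T) =
      ((T : ℂ) ^ 2)⁻¹ * ∫ t₁ in Set.Icc (0 : ℝ) T, ∫ t₂ in Set.Icc (0 : ℝ) T,
        Complex.exp (Complex.I * ω * ((t₁ : ℂ) - (t₂ : ℂ))) * inner ℂ (f t₁) (f t₂) := by
  have hint : IntegrableOn (fun t : ℝ => Complex.exp (-(Complex.I * ω * t)) • f t)
      (Set.Icc 0 T) := (by fun_prop : Continuous _).integrableOn_Icc
  rw [fourierAverage, inner_smul_left, inner_smul_right, inner_integral_integral hint hint]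
  simp only [inner_smul_left, inner_smul_right, conj_exp_neg_I_mul]
  rw [← mul_assoc, map_inv₀, Complex.conj_ofReal, ← mul_inv, ← sq]
  congr 3 with t₁
  congr 2 with t₂
  simp only [← mul_assoc, ← Complex.exp_add]
  ring_nf

theorem inner_fourierAverage_of_inner_eq (hf : Continuous f) (ω T ν : ℝ) {Q : E} {c : ℂ}
    (hfQ : ∀ t : ℝ, inner ℂ (f t) Q = Complex.exp (-(Complex.I * ν * t)) * c) :
    inner ℂ (fourierAverage f ω T) Q =
      (T : ℂ)⁻¹ * (∫ t in Set.Icc (0 : ℝ) T, Complex.exp (Complex.I * (ω - ν) * t)) * c := by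
  have hint : IntegrableOn (fun t : ℝ => Complex.exp (-(Complex.I * ω * t)) • f t)
      (Set.Icc 0 T) := (by fun_prop : Continuous _).integrableOn_Icc
  rw [fourierAverage, inner_smul_left, map_inv₀, Complex.conj_ofReal, inner_integral_left hint,
    mul_assoc, ← integral_mul_const c]
  congr 2 with t
  simp only [inner_smul_left, conj_exp_neg_I_mul, hfQ, ← mul_assoc, ← Complex.exp_add]
  ring_nf

end FourierAverage

theorem mazur_inequality_pre_optimization_general
    (E : Type*) [NormedAddCommGroup E] [InnerProductSpace ℂ E] [CompleteSpace E]
    (U : ℝ → (E →ₗᵢ[ℂ] E))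
    (ω : ℝ) (A : E) (hA : Continuous fun t : ℝ => U t A)
    (n : ℕ) (Q : Fin n → E) (ωj : Fin n → ℝ)
    (hQ : ∀ (t : ℝ) (j : Fin n), U t (Q j) = Complex.exp (Complex.I * ωj j * t) • Q j)
    (T : ℝ) (α : Fin n → ℂ) :
    (((T : ℂ) ^ 2)⁻¹ * ∫ t₁ in Set.Icc (0 : ℝ) T, ∫ t₂ in Set.Icc (0 : ℝ) T,
          Complex.exp (Complex.I * ω * ((t₁ : ℂ) - (t₂ : ℂ))) *
            (inner ℂ (U t₁ A) (U t₂ A) : ℂ)).im = 0 ∧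
    (∑ j : Fin n, 2 * (α j * ((T : ℂ)⁻¹ *
            ∫ t in Set.Icc (0 : ℝ) T, Complex.exp (Complex.I * (ω - ωj j) * t)) *
          (inner ℂ A (Q j) : ℂ)).re) -
        ∑ j : Fin n, ∑ l : Fin n,
          ((starRingEnd ℂ) (α j) * α l * (inner ℂ (Q j) (Q l) : ℂ)).re ≤
      (((T : ℂ) ^ 2)⁻¹ * ∫ t₁ in Set.Icc (0 : ℝ) T, ∫ t₂ in Set.Icc (0 : ℝ) T,
          Complex.exp (Complex.I * ω * ((t₁ : ℂ) - (t₂ : ℂ))) *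
            (inner ℂ (U t₁ A) (U t₂ A) : ℂ)).re := by
  have hOQ (j : Fin n) := inner_fourierAverage_of_inner_eq hA ω T (ωj j) fun t => by
    rw [(U t).inner_map_left_of_apply_eq_smul (Complex.exp_ne_zero _) (hQ t j), Complex.exp_neg]
  rw [← inner_fourierAverage_self hA]
  generalize fourierAverage (fun t => U t A) ω T = O at hOQ ⊢
  refine ⟨inner_self_im (𝕜 := ℂ) O, ?_⟩
  calc _ = 2 * (inner ℂ O (∑ j, α j • Q j)).re -
        (inner ℂ (∑ j, α j • Q j) (∑ j, α j • Q j)).re := by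
        rw [inner_sum_smul_sum_smul, inner_sum]
        simp only [inner_smul_right, hOQ, Complex.re_sum, Finset.mul_sum, mul_assoc]
    _ ≤ _ := two_mul_re_inner_sub_re_inner_self_le (𝕜 := ℂ) _ _

/-- **Pre-optimization Mazur-type inequality** (Eq. (cond) of the paper): for a
one-parameter isometry group `U` (abstract Heisenberg evolution), dynamical
symmetries `Q j` of frequencies `ω_j`, and any coefficients `α j`, nonnegativity of
the squared norm of `O_A(ω) = (1/T)∫₀ᵀ e^{−iωt} U_t A dt − ∑_j α_j Q_j` gives
`(1/T²)∫₀ᵀ∫₀ᵀ e^{iω(t₁−t₂)} ⟪U t₁ A, U t₂ A⟫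
  ≥ ∑_j 2 Re[α_j ((1/T)∫₀ᵀ e^{i(ω−ω_j)t} dt) ⟪A, Q j⟫] − ∑_{j,l} Re[conj(α_j) α_l ⟪Q j, Q l⟫]`. -/
theorem mazur_inequality_pre_optimization
    (E : Type*) [NormedAddCommGroup E] [InnerProductSpace ℂ E] [CompleteSpace E]
    (U : ℝ → (E →ₗᵢ[ℂ] E))
    (hU0 : U 0 = LinearIsometry.id)
    (hUadd : ∀ s t : ℝ, U (s + t) = (U s).comp (U t))
    (ω : ℝ) (A : E) (hA : Continuous fun t : ℝ => U t A)
    (n : ℕ) (Q : Fin n → E) (ωj : Fin n → ℝ)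
    (hQ : ∀ (t : ℝ) (j : Fin n), U t (Q j) = Complex.exp (Complex.I * ωj j * t) • Q j)
    (T : ℝ) (hT : 0 < T) (α : Fin n → ℂ) :
    (((T : ℂ) ^ 2)⁻¹ * ∫ t₁ in Set.Icc (0 : ℝ) T, ∫ t₂ in Set.Icc (0 : ℝ) T,
          Complex.exp (Complex.I * ω * ((t₁ : ℂ) - (t₂ : ℂ))) *
            (inner ℂ (U t₁ A) (U t₂ A) : ℂ)).im = 0 ∧
    (∑ j : Fin n, 2 * (α j * ((T : ℂ)⁻¹ *
            ∫ t in Set.Icc (0 : ℝ) T, Complex.exp (Complex.I * (ω - ωj j) * t)) *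
          (inner ℂ A (Q j) : ℂ)).re) -
        ∑ j : Fin n, ∑ l : Fin n,
          ((starRingEnd ℂ) (α j) * α l * (inner ℂ (Q j) (Q l) : ℂ)).re ≤
      (((T : ℂ) ^ 2)⁻¹ * ∫ t₁ in Set.Icc (0 : ℝ) T, ∫ t₂ in Set.Icc (0 : ℝ) T,
          Complex.exp (Complex.I * ω * ((t₁ : ℂ) - (t₂ : ℂ))) *
            (inner ℂ (U t₁ A) (U t₂ A) : ℂ)).re :=
  mazur_inequality_pre_optimization_general E U ω A hA n Q ωj hQ T α
end

section
/- Let E be a complex Hilbert space with inner product ⟪·,·⟫ (conjugate-linear in the first argument), and let U : ℝ → (E →ₗᵢ[ℂ] E) be a one-parameter group of linear isometries (U_0 = id, U_{s+t} = U_s ∘ U_t). Let ω ∈ ℝ and let Q : Fin n → E satisfy U_t (Q j) = exp(iωt) • Q j for all t, j, with invertible Gram matrix G j l = ⟪Q j, Q l⟫. For X ∈ E with t ↦ U_t X continuous set v_X j = ⟪Q j, X⟫, and for T > 0 define Φ_T(X, Y) := (1/T²)∫_{t₁∈[0,T]}∫_{t₂∈[0,T]} exp(iω(t₁−t₂))·⟪U_{t₁}X,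 U_{t₂}Y⟫ dt₂ dt₁ − star(v_X) ⬝ᵥ (G⁻¹ *ᵥ v_Y). Then for all A, B ∈ E with t ↦ U_t A and t ↦ U_t B continuous: Φ_T(A,A) and Φ_T(B,B) are real and nonnegative, and |Φ_T(A,B)|² ≤ Φ_T(A,A) · Φ_T(B,B). (Off-diagonal generalization of the Mazur-type bound: the finite-time susceptibility matrix minus the dynamical-symmetry contribution is a positive semidefinite sesquilinear form, yielding the paper's bound on off-diagonal response functions.) -/
open MeasureTheory Matrix

/-- The finite-time susceptibility form minus the dynamical-symmetry contribution:
`Φ_T(X,Y) = (1/T²)∫₀ᵀ∫₀ᵀ e^{iω(t₁−t₂)} ⟪U t₁ X, U t₂ Y⟫ − v_X† G⁻¹ v_Y`,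
where `G j l = ⟪Q j, Q l⟫` and `v_X j = ⟪Q j, X⟫`. -/
noncomputable def mazurDefect (E : Type*) [NormedAddCommGroup E] [InnerProductSpace ℂ E]
    (U : ℝ → (E →ₗᵢ[ℂ] E)) (ω : ℝ) {n : ℕ} (Q : Fin n → E) (T : ℝ) (X Y : E) : ℂ :=
  ((T : ℂ) ^ 2)⁻¹ * (∫ t₁ in Set.Icc (0 : ℝ) T, ∫ t₂ in Set.Icc (0 : ℝ) T,
      Complex.exp (Complex.I * ω * ((t₁ : ℂ) - (t₂ : ℂ))) *
        (inner ℂ (U t₁ X) (U t₂ Y) : ℂ)) -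
    star (fun j => (inner ℂ (Q j) X : ℂ)) ⬝ᵥ
      ((Matrix.of fun j l => (inner ℂ (Q j) (Q l) : ℂ))⁻¹ *ᵥ fun j => (inner ℂ (Q j) Y : ℂ))

lemma mazur_eq_inner
    (E : Type*) [NormedAddCommGroup E] [InnerProductSpace ℂ E] [CompleteSpace E]
    (U : ℝ → (E →ₗᵢ[ℂ] E))
    (ω : ℝ) {n : ℕ} (Q : Fin n → E)
    (hQ : ∀ (t : ℝ) (j : Fin n), U t (Q j) = Complex.exp (Complex.I * ω * t) • Q j)
    (hGinv : IsUnit (Matrix.of fun j l => (inner ℂ (Q j) (Q l) : ℂ)).det)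
    (T : ℝ) (hT : 0 < T) :
    ∃ r : E → E, ∀ X Y : E, Continuous (fun t : ℝ => U t X) →
      Continuous (fun t : ℝ => U t Y) →
      mazurDefect E U ω Q T X Y = inner ℂ (r X) (r Y) := by
  classical
  set G : Matrix (Fin n) (Fin n) ℂ := Matrix.of fun j l => (inner ℂ (Q j) (Q l) : ℂ) with hG
  set f : E → ℝ → E := fun X t => Complex.exp (-(Complex.I * ω * t)) • U t X with hf
  set S : E → E := fun X => (T : ℂ)⁻¹ • ∫ t in Set.Icc (0 : ℝ) T, f X t with hS
  set v : E → Fin n → ℂ := fun X j => (inner ℂ (Q j) X : ℂ) with hv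
  set r : E → E := fun X => S X - ∑ j, ((G⁻¹ *ᵥ v X) j) • Q j with hr
  have hTne : (T : ℂ) ≠ 0 := Complex.ofReal_ne_zero.mpr hT.ne'
  -- integrability of f X
  have hint : ∀ X : E, Continuous (fun t : ℝ => U t X) →
      IntegrableOn (f X) (Set.Icc 0 T) := by
    intro X hX
    apply Continuous.integrableOn_Icc
    exact (Complex.continuous_exp.comp (by continuity)).smul hX
  -- conjugate of exponential
  have hexp_conj : ∀ t : ℝ, (starRingEnd ℂ) (Complex.exp (-(Complex.I * ω * t))) =
      Complex.exp (Complex.I * ω * t) := by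
    intro t
    rw [← Complex.exp_conj]
    congr 1
    simp only [map_neg, _root_.map_mul, Complex.conj_I, Complex.conj_ofReal]
    ring
  -- U t fixes e^{-iωt} Q j
  have hQfix : ∀ (t : ℝ) (j : Fin n),
      U t (Complex.exp (-(Complex.I * ω * t)) • Q j) = Q j := by
    intro t j
    rw [LinearIsometry.map_smul, hQ t j, smul_smul, ← Complex.exp_add]
    simp
  -- inner of Q j with f X t
  have hinnerQf : ∀ (X : E) (t : ℝ) (j : Fin n),
      (inner ℂ (Q j) (f X t) : ℂ) = inner ℂ (Q j) X := by
    intro X t j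
    have h1 : (inner ℂ (Q j) (U t X) : ℂ)
        = Complex.exp (Complex.I * ω * t) * inner ℂ (Q j) X := by
      conv_lhs => rw [← hQfix t j]
      rw [LinearIsometry.inner_map_map, inner_smul_left, hexp_conj]
    show (inner ℂ (Q j) (Complex.exp (-(Complex.I * ω * t)) • U t X) : ℂ) = _
    rw [inner_smul_right, h1, ← mul_assoc, ← Complex.exp_add]
    simp
  -- inner of Q j with S X
  have hQS : ∀ X : E, Continuous (fun t : ℝ => U t X) →
      ∀ j, (inner ℂ (Q j) (S X) : ℂ) = v X j := by
    intro X hX j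
    show (inner ℂ (Q j) ((T : ℂ)⁻¹ • ∫ t in Set.Icc (0 : ℝ) T, f X t) : ℂ) = _
    rw [inner_smul_right, ← integral_inner (hint X hX)]
    simp only [hinnerQf]
    rw [setIntegral_const, Real.volume_real_Icc_of_le hT.le, sub_zero,
      Complex.real_smul, ← mul_assoc,
      inv_mul_cancel₀ hTne, one_mul]
  refine ⟨r, fun X Y hX hY => ?_⟩
  -- pointwise identity for the double-integral integrand
  have hpt : ∀ t₁ t₂ : ℝ,
      Complex.exp (Complex.I * ω * ((t₁ : ℂ) - (t₂ : ℂ))) *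
        (inner ℂ (U t₁ X) (U t₂ Y) : ℂ) = (inner ℂ (f X t₁) (f Y t₂) : ℂ) := by
    intro t₁ t₂
    show _ = (inner ℂ (Complex.exp (-(Complex.I * ω * t₁)) • U t₁ X)
      (Complex.exp (-(Complex.I * ω * t₂)) • U t₂ Y) : ℂ)
    rw [inner_smul_left, inner_smul_right, hexp_conj, ← mul_assoc, ← Complex.exp_add]
    congr 2
    ring
  -- double integral equals inner of the two integrals
  have hdouble : (∫ t₁ in Set.Icc (0 : ℝ) T, ∫ t₂ in Set.Icc (0 : ℝ) T,
      Complex.exp (Complex.I * ω * ((t₁ : ℂ) - (t₂ : ℂ))) *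
        (inner ℂ (U t₁ X) (U t₂ Y) : ℂ))
      = (inner ℂ (∫ t in Set.Icc (0 : ℝ) T, f X t)
          (∫ t in Set.Icc (0 : ℝ) T, f Y t) : ℂ) := by
    have step1 : ∀ t₁ : ℝ, (∫ t₂ in Set.Icc (0 : ℝ) T,
        Complex.exp (Complex.I * ω * ((t₁ : ℂ) - (t₂ : ℂ))) *
          (inner ℂ (U t₁ X) (U t₂ Y) : ℂ))
        = (inner ℂ (f X t₁) (∫ t in Set.Icc (0 : ℝ) T, f Y t) : ℂ) := by
      intro t₁
      rw [← integral_inner (hint Y hY)]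
      exact setIntegral_congr_fun measurableSet_Icc fun t₂ _ => hpt t₁ t₂
    simp only [step1]
    have : ∀ t₁ : ℝ, (inner ℂ (f X t₁) (∫ t in Set.Icc (0 : ℝ) T, f Y t) : ℂ)
        = (starRingEnd ℂ) (inner ℂ (∫ t in Set.Icc (0 : ℝ) T, f Y t) (f X t₁)) := by
      intro t₁; rw [inner_conj_symm]
    simp only [this]
    rw [integral_conj, integral_inner (hint X hX), inner_conj_symm]
  -- the Gram-matrix cancellation
  have hGram : ∀ j, (∑ l, (G⁻¹ *ᵥ v Y) l * G j l) = v Y j := by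
    intro j
    have h1 : G *ᵥ (G⁻¹ *ᵥ v Y) = v Y := by
      rw [Matrix.mulVec_mulVec, Matrix.mul_nonsing_inv _ hGinv, Matrix.one_mulVec]
    calc (∑ l, (G⁻¹ *ᵥ v Y) l * G j l) = ∑ l, G j l * (G⁻¹ *ᵥ v Y) l := by
          exact Finset.sum_congr rfl fun l _ => mul_comm _ _
      _ = (G *ᵥ (G⁻¹ *ᵥ v Y)) j := by simp [Matrix.mulVec, dotProduct]
      _ = v Y j := by rw [h1]
  -- inner ℂ (Q j) (r Y) = 0
  have hort : ∀ j, (inner ℂ (Q j) (r Y) : ℂ) = 0 := by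
    intro j
    show (inner ℂ (Q j) (S Y - ∑ l, ((G⁻¹ *ᵥ v Y) l) • Q l) : ℂ) = 0
    rw [inner_sub_right, hQS Y hY j, inner_sum]
    simp only [inner_smul_right]
    have : (∑ l, (G⁻¹ *ᵥ v Y) l * (inner ℂ (Q j) (Q l) : ℂ)) = v Y j := hGram j
    rw [this, sub_self]
  -- final computation
  have hrXY : (inner ℂ (r X) (r Y) : ℂ) = (inner ℂ (S X) (S Y) : ℂ) -
      star (v X) ⬝ᵥ (G⁻¹ *ᵥ v Y) := by
    have e1 : (inner ℂ (r X) (r Y) : ℂ) = inner ℂ (S X) (r Y) := by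
      show (inner ℂ (S X - ∑ j, ((G⁻¹ *ᵥ v X) j) • Q j) (r Y) : ℂ) = _
      rw [inner_sub_left, sum_inner]
      simp only [inner_smul_left, hort, mul_zero, Finset.sum_const_zero, sub_zero]
    rw [e1]
    show (inner ℂ (S X) (S Y - ∑ j, ((G⁻¹ *ᵥ v Y) j) • Q j) : ℂ) = _
    rw [inner_sub_right, inner_sum]
    congr 1
    simp only [inner_smul_right]
    rw [dotProduct]
    refine Finset.sum_congr rfl fun j _ => ?_
    rw [← inner_conj_symm, hQS X hX j]
    simp [mul_comm]
  -- assemble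
  rw [hrXY]
  show ((T : ℂ) ^ 2)⁻¹ * _ - star (v X) ⬝ᵥ (G⁻¹ *ᵥ v Y) = _
  congr 1
  rw [hdouble]
  show _ = (inner ℂ ((T : ℂ)⁻¹ • ∫ t in Set.Icc (0 : ℝ) T, f X t)
    ((T : ℂ)⁻¹ • ∫ t in Set.Icc (0 : ℝ) T, f Y t) : ℂ)
  rw [inner_smul_left, inner_smul_right, map_inv₀, Complex.conj_ofReal, ← mul_assoc]
  congr 1
  ring

/-- **Off-diagonal Mazur-type bound**: the finite-time susceptibility matrix minus the
dynamical-symmetry contribution is a positive semidefinite sesquilinear form; in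
particular its diagonal values are real and nonnegative and its off-diagonal values
satisfy a Cauchy–Schwarz inequality, which yields the paper's bound on off-diagonal
response functions. -/
theorem mazur_defect_positive_semidefinite
    (E : Type*) [NormedAddCommGroup E] [InnerProductSpace ℂ E] [CompleteSpace E]
    (U : ℝ → (E →ₗᵢ[ℂ] E))
    (hU0 : U 0 = LinearIsometry.id)
    (hUadd : ∀ s t : ℝ, U (s + t) = (U s).comp (U t))
    (ω : ℝ) (n : ℕ) (Q : Fin n → E)
    (hQ : ∀ (t : ℝ) (j : Fin n), U t (Q j) = Complex.exp (Complex.I * ω * t) • Q j)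
    (hGinv : IsUnit (Matrix.of fun j l => (inner ℂ (Q j) (Q l) : ℂ)).det)
    (T : ℝ) (hT : 0 < T)
    (A B : E) (hA : Continuous fun t : ℝ => U t A) (hB : Continuous fun t : ℝ => U t B) :
    (mazurDefect E U ω Q T A A).im = 0 ∧ 0 ≤ (mazurDefect E U ω Q T A A).re ∧
    (mazurDefect E U ω Q T B B).im = 0 ∧ 0 ≤ (mazurDefect E U ω Q T B B).re ∧
    ‖mazurDefect E U ω Q T A B‖ ^ 2 ≤
      (mazurDefect E U ω Q T A A).re * (mazurDefect E U ω Q T B B).re := by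
  obtain ⟨r, hr⟩ := mazur_eq_inner E U ω Q hQ hGinv T hT
  have hAA := hr A A hA hA
  have hBB := hr B B hB hB
  have hAB := hr A B hA hB
  rw [hAA, hBB, hAB]
  have imA : (inner ℂ (r A) (r A) : ℂ).im = 0 := by
    rw [← RCLike.im_to_complex]; exact inner_self_im _
  have imB : (inner ℂ (r B) (r B) : ℂ).im = 0 := by
    rw [← RCLike.im_to_complex]; exact inner_self_im _
  have reA : (inner ℂ (r A) (r A) : ℂ).re = ‖r A‖ ^ 2 := by
    rw [← RCLike.re_to_complex]; exact inner_self_eq_norm_sq _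
  have reB : (inner ℂ (r B) (r B) : ℂ).re = ‖r B‖ ^ 2 := by
    rw [← RCLike.re_to_complex]; exact inner_self_eq_norm_sq _
  refine ⟨imA, by rw [reA]; positivity, imB, by rw [reB]; positivity, ?_⟩
  rw [reA, reB]
  have h := norm_inner_le_norm (𝕜 := ℂ) (r A) (r B)
  calc ‖(inner ℂ (r A) (r B) : ℂ)‖ ^ 2
      ≤ (‖r A‖ * ‖r B‖) ^ 2 := by
        exact pow_le_pow_left₀ (norm_nonneg _) h 2
    _ = ‖r A‖ ^ 2 * ‖r B‖ ^ 2 := by ring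
end

section
/- Let E be a complex inner product space with inner product ⟪·,·⟫ (conjugate-linear in the first argument), let U : E ≃ₗᵢ[ℂ] E be a linear isometric equivalence (Floquet propagator acting on observables), let τ > 0, ω ∈ ℝ, and let Q : Fin n → E satisfy U (Q j) = exp(iωτ) • Q j for all j, with invertible Gram matrix G j l = ⟪Q j, Q l⟫. Let A ∈ E and set v j = ⟪Q j, A⟫. Then for every integer L ≥ 1, the number (1/L²)∑_{l₁=0}^{L−1}∑_{l₂=0}^{L−1} exp(iωτ(l₁−l₂))·⟪U^{l₁}A, U^{l₂}A⟫ is real and nonnegative, star(v) ⬝ᵥ (G⁻¹ *ᵥ v) is real and nonnegative, and (1/L²)∑_{l₁,l₂} exp(iωτ(l₁−l₂))·⟪U^{l₁}A, U^{l₂}A⟫ ≥ star(v) ⬝ᵥ (G⁻¹ *ᵥ v). (Discrete-time/Floquet Mazur-type lower bound on the Fourier component at frequency ω of the stroboscopic autocorrelation in terms of dynamical symmetries Q j satisfying the Floquet eigenoperator condition.) -/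
/-!
Let `c = e^{iωτ}`. Because `U` is an isometry and `U^l Q_j = c^l Q_j`, every term of the
time average `x = L⁻¹ ∑_{l<L} c̄^l U^l A` has overlap `⟪Q_j, c̄^l U^l A⟫ = ⟪Q_j, A⟫` with the
dynamical symmetries, and the Fourier component of the autocorrelation is exactly `‖x‖²`.
On the other hand `v† G⁻¹ v = ‖y‖²`, where `y = ∑_j (G⁻¹ v)_j Q_j` is the orthogonal projection
of `x` onto the span of the `Q_j`; hence `‖y‖² ≤ ‖x‖²` (Bessel).
-/

open Matrix

open scoped InnerProductSpace ComplexConjugate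

section InnerProductSpace

variable {𝕜 E : Type*} [RCLike 𝕜] [NormedAddCommGroup E] [InnerProductSpace 𝕜 E]

section Gram

variable {ι : Type*} [Fintype ι]

theorem inner_sum_smul_left_eq_star_dotProduct (Q : ι → E) (a : ι → 𝕜) (x : E) :
    ⟪∑ i, a i • Q i, x⟫_𝕜 = star a ⬝ᵥ fun i => ⟪Q i, x⟫_𝕜 := by
  simp only [sum_inner, inner_smul_left, dotProduct, Pi.star_apply, RCLike.star_def]

theorem norm_sum_smul_le_of_gram_mulVec {Q : ι → E} {x : E} {a : ι → 𝕜}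
    (ha : gram 𝕜 Q *ᵥ a = fun i => ⟪Q i, x⟫_𝕜) : ‖∑ i, a i • Q i‖ ≤ ‖x‖ := by
  set y := ∑ i, a i • Q i
  have hyx : ⟪y, x⟫_𝕜 = ((‖y‖ ^ 2 : ℝ) : 𝕜) := by
    rw [inner_sum_smul_left_eq_star_dotProduct, ← ha, star_dotProduct_gram_mulVec,
      inner_self_eq_norm_sq_to_K]
    push_cast; rfl
  have hcs : ‖y‖ ^ 2 ≤ ‖y‖ * ‖x‖ := by
    simpa [hyx] using norm_inner_le_norm (𝕜 := 𝕜) y x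
  nlinarith [norm_nonneg y, norm_nonneg x]

theorem star_dotProduct_gram_inv_mulVec [DecidableEq ι] {Q : ι → E} (hQ : IsUnit (gram 𝕜 Q).det)
    (v : ι → 𝕜) :
    star v ⬝ᵥ ((gram 𝕜 Q)⁻¹ *ᵥ v) =
      ⟪∑ i, ((gram 𝕜 Q)⁻¹ *ᵥ v) i • Q i, ∑ i, ((gram 𝕜 Q)⁻¹ *ᵥ v) i • Q i⟫_𝕜 := by
  set a := (gram 𝕜 Q)⁻¹ *ᵥ v
  have hv : v = gram 𝕜 Q *ᵥ a := by
    rw [mulVec_mulVec, mul_nonsing_inv _ hQ, one_mulVec]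
  rw [hv, star_mulVec, ← dotProduct_mulVec, (isHermitian_gram 𝕜 Q).eq,
    star_dotProduct_gram_mulVec]

end Gram

theorem LinearIsometryEquiv.pow_apply_of_apply_eq_smul {U : E ≃ₗᵢ[𝕜] E} {q : E} {c : 𝕜}
    (hq : U q = c • q) (l : ℕ) : (U ^ l) q = c ^ l • q := by
  induction l with
  | zero => simp
  | succ l ih =>
    rw [pow_succ, LinearIsometryEquiv.coe_mul, Function.comp_apply, hq, map_smul, ih, smul_smul,
      ← pow_succ']

theorem LinearIsometryEquiv.inner_conj_pow_smul_pow_apply_of_apply_eq_smul {U : E ≃ₗᵢ[𝕜] E}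
    {q : E} {c : 𝕜} (hq : U q = c • q) (a : E) (l : ℕ) :
    ⟪q, conj c ^ l • (U ^ l) a⟫_𝕜 = ⟪q, a⟫_𝕜 := by
  rw [← (U ^ l).inner_map_map q a, pow_apply_of_apply_eq_smul hq, inner_smul_left,
    inner_smul_right, map_pow]

theorem inner_inv_card_smul_sum_of_forall_inner_eq {α : Type*} {s : Finset α} (hs : s.Nonempty)
    {q : E} {u : α → E} {w : 𝕜} (hu : ∀ l ∈ s, ⟪q, u l⟫_𝕜 = w) :
    ⟪q, (s.card : 𝕜)⁻¹ • ∑ l ∈ s, u l⟫_𝕜 = w := by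
  rw [inner_smul_right, inner_sum, Finset.sum_congr rfl hu, Finset.sum_const, nsmul_eq_mul,
    ← mul_assoc, inv_mul_cancel₀ (by simpa using hs.ne_empty), one_mul]

theorem inner_sum_smul_sum_smul_self {α : Type*} (s : Finset α) (f : α → 𝕜) (u : α → E) :
    ⟪∑ l ∈ s, f l • u l, ∑ l ∈ s, f l • u l⟫_𝕜 =
      ∑ l₁ ∈ s, ∑ l₂ ∈ s, conj (f l₁) * f l₂ * ⟪u l₁, u l₂⟫_𝕜 := by
  simp_rw [sum_inner, inner_smul_left, inner_sum, inner_smul_right, Finset.mul_sum, mul_assoc]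

end InnerProductSpace

theorem inv_sq_mul_sum_exp_mul_inner_eq_inner_self {E : Type*} [NormedAddCommGroup E]
    [InnerProductSpace ℂ E] (U : E ≃ₗᵢ[ℂ] E) (ω τ : ℝ) (A : E) (L : ℕ) :
    ((L : ℂ) ^ 2)⁻¹ * ∑ l₁ ∈ Finset.range L, ∑ l₂ ∈ Finset.range L,
        Complex.exp (Complex.I * ω * τ * ((l₁ : ℂ) - (l₂ : ℂ))) * ⟪(U ^ l₁) A, (U ^ l₂) A⟫_ℂ =
      let x := (L : ℂ)⁻¹ •
        ∑ l ∈ Finset.range L, conj (Complex.exp (Complex.I * ω * τ)) ^ l • (U ^ l) A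
      ⟪x, x⟫_ℂ := by
  set c := Complex.exp (Complex.I * ω * τ)
  have hconj : conj c = Complex.exp (-(Complex.I * ω * τ)) := by
    rw [← Complex.exp_conj]
    simp
  have hphase (l₁ l₂ : ℕ) : Complex.exp (Complex.I * ω * τ * ((l₁ : ℂ) - (l₂ : ℂ))) =
      conj (conj c ^ l₁) * conj c ^ l₂ := by
    rw [map_pow, Complex.conj_conj, hconj, ← Complex.exp_nat_mul, ← Complex.exp_nat_mul,
      ← Complex.exp_add]
    ring_nf
  rw [inner_smul_left, inner_smul_right, inner_sum_smul_sum_smul_self]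
  simp only [hphase, map_inv₀, Complex.conj_natCast, Finset.mul_sum]
  ring_nf

theorem floquet_mazur_bound_general
    (E : Type*) [NormedAddCommGroup E] [InnerProductSpace ℂ E]
    (U : E ≃ₗᵢ[ℂ] E) (τ : ℝ) (ω : ℝ)
    (n : ℕ) (Q : Fin n → E)
    (hQ : ∀ j : Fin n, U (Q j) = Complex.exp (Complex.I * ω * τ) • Q j)
    (G : Matrix (Fin n) (Fin n) ℂ)
    (hG : G = Matrix.of fun j l => (inner ℂ (Q j) (Q l) : ℂ))
    (hGinv : IsUnit G.det)
    (A : E) (v : Fin n → ℂ) (hv : v = fun j => (inner ℂ (Q j) A : ℂ))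
    (L : ℕ) (hL : 1 ≤ L) :
    (((L : ℂ) ^ 2)⁻¹ * ∑ l₁ ∈ Finset.range L, ∑ l₂ ∈ Finset.range L,
        Complex.exp (Complex.I * ω * τ * ((l₁ : ℂ) - (l₂ : ℂ))) *
          (inner ℂ ((U ^ l₁) A) ((U ^ l₂) A) : ℂ)).im = 0 ∧
    0 ≤ (((L : ℂ) ^ 2)⁻¹ * ∑ l₁ ∈ Finset.range L, ∑ l₂ ∈ Finset.range L,
        Complex.exp (Complex.I * ω * τ * ((l₁ : ℂ) - (l₂ : ℂ))) *
          (inner ℂ ((U ^ l₁) A) ((U ^ l₂) A) : ℂ)).re ∧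
    (star v ⬝ᵥ (G⁻¹ *ᵥ v)).im = 0 ∧
    0 ≤ (star v ⬝ᵥ (G⁻¹ *ᵥ v)).re ∧
    (star v ⬝ᵥ (G⁻¹ *ᵥ v)).re ≤
      (((L : ℂ) ^ 2)⁻¹ * ∑ l₁ ∈ Finset.range L, ∑ l₂ ∈ Finset.range L,
        Complex.exp (Complex.I * ω * τ * ((l₁ : ℂ) - (l₂ : ℂ))) *
          (inner ℂ ((U ^ l₁) A) ((U ^ l₂) A) : ℂ)).re := by
  replace hG : G = gram ℂ Q := hG
  subst hG
  set c := Complex.exp (Complex.I * ω * τ)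
  set x : E := (L : ℂ)⁻¹ • ∑ l ∈ Finset.range L, conj c ^ l • (U ^ l) A
  have hvx : v = fun j => ⟪Q j, x⟫_ℂ := by
    subst hv
    funext j
    have hne : (Finset.range L).Nonempty := Finset.nonempty_range_iff.mpr (by omega)
    simpa using (inner_inv_card_smul_sum_of_forall_inner_eq hne fun l _ =>
      U.inner_conj_pow_smul_pow_apply_of_apply_eq_smul (hQ j) A l).symm
  have hyx : ‖∑ i, ((gram ℂ Q)⁻¹ *ᵥ v) i • Q i‖ ≤ ‖x‖ :=
    norm_sum_smul_le_of_gram_mulVec <| by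
      rw [mulVec_mulVec, mul_nonsing_inv _ hGinv, one_mulVec, hvx]
  rw [inv_sq_mul_sum_exp_mul_inner_eq_inner_self, star_dotProduct_gram_inv_mulVec hGinv]
  refine ⟨inner_self_im (𝕜 := ℂ) x, inner_self_nonneg (𝕜 := ℂ), inner_self_im (𝕜 := ℂ) _,
    inner_self_nonneg (𝕜 := ℂ), ?_⟩
  change RCLike.re ⟪_, _⟫_ℂ ≤ RCLike.re ⟪x, x⟫_ℂ
  rw [inner_self_eq_norm_sq, inner_self_eq_norm_sq]
  gcongr

/-- **Discrete-time (Floquet) Mazur-type bound**: for a linear isometric equivalence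
`U` of a complex inner product space (the stroboscopic Heisenberg evolution over one
driving period `τ`) and dynamical symmetries `Q j` with `U (Q j) = e^{iωτ} Q j` and
invertible Gram matrix `G`, the Fourier component
`(1/L²)∑_{l₁,l₂=0}^{L−1} e^{iωτ(l₁−l₂)} ⟪U^{l₁} A, U^{l₂} A⟫` is real and nonnegative,
`v† G⁻¹ v` (with `v j = ⟪Q j, A⟫`) is real and nonnegative, and the former dominates
the latter. -/
theorem floquet_mazur_bound
    (E : Type*) [NormedAddCommGroup E] [InnerProductSpace ℂ E]
    (U : E ≃ₗᵢ[ℂ] E) (τ : ℝ) (hτ : 0 < τ) (ω : ℝ)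
    (n : ℕ) (Q : Fin n → E)
    (hQ : ∀ j : Fin n, U (Q j) = Complex.exp (Complex.I * ω * τ) • Q j)
    (G : Matrix (Fin n) (Fin n) ℂ)
    (hG : G = Matrix.of fun j l => (inner ℂ (Q j) (Q l) : ℂ))
    (hGinv : IsUnit G.det)
    (A : E) (v : Fin n → ℂ) (hv : v = fun j => (inner ℂ (Q j) A : ℂ))
    (L : ℕ) (hL : 1 ≤ L) :
    (((L : ℂ) ^ 2)⁻¹ * ∑ l₁ ∈ Finset.range L, ∑ l₂ ∈ Finset.range L,
        Complex.exp (Complex.I * ω * τ * ((l₁ : ℂ) - (l₂ : ℂ))) *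
          (inner ℂ ((U ^ l₁) A) ((U ^ l₂) A) : ℂ)).im = 0 ∧
    0 ≤ (((L : ℂ) ^ 2)⁻¹ * ∑ l₁ ∈ Finset.range L, ∑ l₂ ∈ Finset.range L,
        Complex.exp (Complex.I * ω * τ * ((l₁ : ℂ) - (l₂ : ℂ))) *
          (inner ℂ ((U ^ l₁) A) ((U ^ l₂) A) : ℂ)).re ∧
    (star v ⬝ᵥ (G⁻¹ *ᵥ v)).im = 0 ∧
    0 ≤ (star v ⬝ᵥ (G⁻¹ *ᵥ v)).re ∧
    (star v ⬝ᵥ (G⁻¹ *ᵥ v)).re ≤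
      (((L : ℂ) ^ 2)⁻¹ * ∑ l₁ ∈ Finset.range L, ∑ l₂ ∈ Finset.range L,
        Complex.exp (Complex.I * ω * τ * ((l₁ : ℂ) - (l₂ : ℂ))) *
          (inner ℂ ((U ^ l₁) A) ((U ^ l₂) A) : ℂ)).re :=
  floquet_mazur_bound_general E U τ ω n Q hQ G hG hGinv A v hv L hL
end
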